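/- Let T > 0, let α ∈ (0,1) and β ∈ (0,1] satisfy α + β > 1, and let m ∈ [1, ∞). Let (Ω, 𝓕, (𝓖_t)_{t∈[0,T]}, ℙ) be a filtered probability space, let X : [0,T] → ℝ^d be an α-Hölder continuous path, and let Z : Ω × [0,T] → L(ℝ^d, ℝ^n) be a stochastic process such that Z_t is 𝓖_t-measurable and L^m-integrable for each t and ‖Z‖_{β;m} := sup_{0 ≤ s < t ≤ T} ‖Z_t − Z_s‖_{L^m}/(t − s)^β < ∞. Then there exists an adapted, L^m-integrable process I : Ω × [0,T] → ℝ^n with I_0 = 0 (the stochastic Young integral ∫_0^· Z dX) such that: (i) ‖I_t − I_s − Z_s (X_t − X_s)‖_{L^m} ≤ K ‖X‖_α ‖Z‖_{β;m} (t − s)^{α+β} for all 0 ≤ s ≤ t ≤ T, where K depends only on α and β; and (ii) for every sequence of partitions π of [0,T] whose mesh tends to 0, sup_{t ∈ [0,T]} ‖I_t − Σ_{[u,v] ∈ π, u ≤ t} Z_u (X_{v∧t} − X_u)‖_{L^m} → 0. -/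

import Mathlib

/-!
View the germ `A s t = Z_s (X_t - X_s)` in the Banach space `Lᵐ`. Its defect
`A s t - A s u - A u t = (Z_s - Z_u) (X_t - X_u)` has norm at most `CX CZ (t - s)^θ` with
`θ = α + β > 1`, so the sewing lemma applies: the dyadic Riemann sums of `A` converge to a path `L`
with `‖L t - L s - A s t‖ ≤ K CX CZ (t - s)^θ`. The constant comes from Young's maximal
inequality: a partition of `[s, t]` with `k` interior points has one whose neighbours are at
distance at most `2 (t - s) / k`; removing it changes the Riemann sum by at most
`CX CZ (2 (t - s) / k)^θ`, and these costs are summable.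

Telescoping the local estimate over a partition of mesh `δ` bounds the error of the left-point
Riemann sums by `K CX CZ δ^(θ - 1) T`. These Riemann sums are `𝒢_t`-measurable and the
`𝒢_t`-measurable classes form a closed subgroup of `Lᵐ`, so `L t` has a `𝒢_t`-measurable
representative `I t`.
-/

open MeasureTheory Filter Set Finset Topology

theorem rpow_le_rpow_sub_one_mul {x h θ : ℝ} (hx : 0 ≤ x) (hxh : x ≤ h) (hθ : 1 ≤ θ) :
    x ^ θ ≤ h ^ (θ - 1) * x := by
  calc x ^ θ = x ^ (θ - 1) * x := by rw [← Real.rpow_add_one' hx (by linarith), sub_add_cancel]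
    _ ≤ h ^ (θ - 1) * x := by gcongr

theorem min_add_sub_min_le {x h t : ℝ} (hh : 0 ≤ h) : min (x + h) t - min x t ≤ h := by
  simp only [min_def]; split_ifs <;> linarith

theorem apply_zero_le_of_forall_le_succ {u : ℕ → ℝ} {N : ℕ} (hu : ∀ i < N, u i ≤ u (i + 1))
    {i : ℕ} (hi : i ≤ N) : u 0 ≤ u i := by
  induction i with
  | zero => exact le_rfl
  | succ i ih => exact (ih (by omega)).trans (hu i (by omega))

theorem Finset.sum_range_two_mul {M : Type*} [AddCommMonoid M] (f : ℕ → M) (n : ℕ) :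
    ∑ j ∈ range (2 * n), f j = ∑ i ∈ range n, (f (2 * i) + f (2 * i + 1)) := by
  induction n with
  | zero => simp
  | succ n ih => rw [Nat.mul_succ, sum_range_succ, sum_range_succ, sum_range_succ, ih, add_assoc]

theorem summable_div_two_pow_rpow {T γ : ℝ} (hT : 0 ≤ T) (hγ : 0 < γ) :
    Summable fun k : ℕ => (T / 2 ^ k) ^ γ := by
  have h2 : 1 < (2 : ℝ) ^ γ := Real.one_lt_rpow (by norm_num) hγ
  have : (fun k : ℕ => (T / 2 ^ k) ^ γ) = fun k => T ^ γ * ((2 ^ γ)⁻¹) ^ k := by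
    ext k
    rw [Real.div_rpow hT (by positivity), inv_pow, Real.rpow_pow_comm (by norm_num), div_eq_mul_inv]
  rw [this]
  exact (summable_geometric_of_lt_one (by positivity) (inv_lt_one_of_one_lt₀ h2)).mul_left _

theorem tendsto_mul_rpow_nhds_zero (c : ℝ) {γ : ℝ} (hγ : 0 < γ) :
    Tendsto (fun x : ℝ => c * x ^ γ) (𝓝 0) (𝓝 0) := by
  simpa [Real.zero_rpow hγ.ne'] using
    ((Real.continuousAt_rpow_const 0 γ (Or.inr hγ.le)).tendsto.const_mul c)

theorem exists_pos_mul_rpow_le (c : ℝ) {γ ε : ℝ} (hγ : 0 < γ) (hε : 0 < ε) :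
    ∃ δ > 0, c * δ ^ γ ≤ ε :=
  (((tendsto_mul_rpow_nhds_zero c hγ).mono_left (nhdsWithin_le_nhds (s := Ioi 0))).eventually
    (ge_mem_nhds hε) |>.and self_mem_nhdsWithin).exists.imp fun _ h => ⟨h.2, h.1⟩

theorem Monotone.exists_gap_le {u : ℕ → ℝ} (hu : Monotone u) (N : ℕ) :
    ∃ p < N + 1, u (p + 2) - u p ≤ 2 * (u (N + 2) - u 0) / (N + 1) := by
  obtain ⟨p, hp, h⟩ := exists_le_of_sum_le (nonempty_range_add_one (n := N))
    (f := fun p => u (p + 2) - u p) (g := fun _ => 2 * (u (N + 2) - u 0) / (N + 1)) <| by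
    have hsplit : ∑ i ∈ range (N + 1), (u (i + 2) - u i) =
        ∑ i ∈ range (N + 1), (u (i + 1 + 1) - u (i + 1)) +
          ∑ i ∈ range (N + 1), (u (i + 1) - u i) := by
      rw [← sum_add_distrib]; exact sum_congr rfl fun i _ => by ring
    rw [sum_const, card_range, nsmul_eq_mul, hsplit, sum_range_sub (fun i => u (i + 1)),
      sum_range_sub u]
    push_cast
    rw [mul_div_cancel₀ _ (by positivity)]
    linarith [hu (Nat.zero_le 1), hu (Nat.le_succ (N + 1))]
  exact ⟨p, Finset.mem_range.1 hp, h⟩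

noncomputable def youngConst (θ : ℝ) : ℝ := 2 ^ θ * ∑' k : ℕ, (((k : ℝ) + 1) ^ θ)⁻¹

theorem summable_inv_add_one_rpow {θ : ℝ} (hθ : 1 < θ) :
    Summable fun k : ℕ => (((k : ℝ) + 1) ^ θ)⁻¹ := by
  simpa using (summable_nat_add_iff 1).2 (Real.summable_nat_rpow_inv.2 hθ)

theorem youngConst_pos {θ : ℝ} (hθ : 1 < θ) : 0 < youngConst θ :=
  mul_pos (by positivity) ((summable_inv_add_one_rpow hθ).tsum_pos (fun _ => by positivity) 0
    (by positivity))

section Sewing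

variable {E : Type*} [NormedAddCommGroup E] {A : ℝ → ℝ → E} {C θ T : ℝ}

def DefectBound (A : ℝ → ℝ → E) (C θ T : ℝ) : Prop :=
  ∀ s u t, 0 ≤ s → s ≤ u → u ≤ t → t ≤ T → ‖A s t - A s u - A u t‖ ≤ C * (t - s) ^ θ

noncomputable def gridSum (A : ℝ → ℝ → E) (h : ℝ) (N : ℕ) (t : ℝ) : E :=
  ∑ j ∈ range N, A (min (j * h) t) (min ((j + 1) * h) t)

theorem sum_range_eq_sum_skip (A : ℝ → ℝ → E) {u v : ℕ → ℝ} {p : ℕ}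
    (hv_le : ∀ j ≤ p, v j = u j) (hv_gt : ∀ j, p < j → v j = u (j + 1)) {N : ℕ} (hpN : p ≤ N) :
    ∑ i ∈ range (N + 2), A (u i) (u (i + 1)) =
      ∑ j ∈ range (N + 1), A (v j) (v (j + 1)) -
        (A (u p) (u (p + 2)) - A (u p) (u (p + 1)) - A (u (p + 1)) (u (p + 2))) := by
  induction N, hpN using Nat.le_induction with
  | base =>
    have hlow : ∑ j ∈ range p, A (v j) (v (j + 1)) = ∑ j ∈ range p, A (u j) (u (j + 1)) :=
      sum_congr rfl fun j hj => by
        rw [Finset.mem_range] at hj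
        rw [hv_le j hj.le, hv_le (j + 1) hj]
    rw [sum_range_succ, sum_range_succ, sum_range_succ, hlow, hv_le p le_rfl,
      hv_gt (p + 1) (by omega)]
    abel
  | succ N hpN ih =>
    rw [sum_range_succ, ih, sum_range_succ _ (N + 1), hv_gt (N + 1) (by omega),
      hv_gt (N + 1 + 1) (by omega)]
    abel

namespace DefectBound

theorem apply_self_eq_zero (hA : DefectBound A C θ T) (hθ : θ ≠ 0) {x : ℝ} (hx : 0 ≤ x)
    (hxT : x ≤ T) : A x x = 0 := by
  simpa [Real.zero_rpow hθ] using hA x x x hx le_rfl le_rfl hxT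

theorem norm_sum_range_succ_sub_le (hA : DefectBound A C θ T) (hC : 0 ≤ C) (hθ : 0 ≤ θ) (N : ℕ)
    {u : ℕ → ℝ} (hu : Monotone u) (hu0 : 0 ≤ u 0) (huT : u (N + 1) ≤ T) :
    ‖∑ i ∈ range (N + 1), A (u i) (u (i + 1)) - A (u 0) (u (N + 1))‖ ≤
      2 ^ θ * (∑ k ∈ range N, (((k : ℝ) + 1) ^ θ)⁻¹) * C * (u (N + 1) - u 0) ^ θ := by
  induction N generalizing u with
  | zero => simp
  | succ N ih =>
    show ‖∑ i ∈ range (N + 2), A (u i) (u (i + 1)) - A (u 0) (u (N + 2))‖ ≤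
      _ * C * (u (N + 2) - u 0) ^ θ
    replace huT : u (N + 2) ≤ T := huT
    set Δ := u (N + 2) - u 0
    -- remove the interior point `u (p + 1)` whose neighbours are closest
    obtain ⟨p, hp, hgap⟩ := hu.exists_gap_le N
    set v : ℕ → ℝ := fun j => u (if j ≤ p then j else j + 1)
    have hv : Monotone v := hu.comp fun i j hij => by split_ifs <;> omega
    have hv0 : v 0 = u 0 := by simp [v]
    have hvN : v (N + 1) = u (N + 2) := by simp [v, show ¬ N + 1 ≤ p by omega]
    have hsum := sum_range_eq_sum_skip A (u := u) (v := v) (fun j hj => by simp [v, hj])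
      (fun j hj => by simp [v, show ¬ j ≤ p by omega]) (show p ≤ N by omega)
    have hΔ : 0 ≤ Δ := sub_nonneg.2 (hu (Nat.zero_le _))
    have hremove : ‖A (u p) (u (p + 2)) - A (u p) (u (p + 1)) - A (u (p + 1)) (u (p + 2))‖ ≤
        2 ^ θ * (((N : ℝ) + 1) ^ θ)⁻¹ * C * Δ ^ θ :=
      calc _ ≤ C * (u (p + 2) - u p) ^ θ :=
            hA _ _ _ (hu0.trans (hu (Nat.zero_le p))) (hu (Nat.le_succ p))
              (hu (Nat.le_succ (p + 1))) ((hu (show p + 2 ≤ N + 2 by omega)).trans huT)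
        _ ≤ C * (2 * Δ / (N + 1)) ^ θ := by
            gcongr
            exact sub_nonneg.2 (hu (by omega))
        _ = 2 ^ θ * (((N : ℝ) + 1) ^ θ)⁻¹ * C * Δ ^ θ := by
            rw [Real.div_rpow (by positivity) (by positivity), Real.mul_rpow (by norm_num) hΔ]
            ring
    calc _ = ‖(∑ j ∈ range (N + 1), A (v j) (v (j + 1)) - A (v 0) (v (N + 1))) -
          (A (u p) (u (p + 2)) - A (u p) (u (p + 1)) - A (u (p + 1)) (u (p + 2)))‖ := by
          rw [hsum, hv0, hvN]; congr 1; abel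
      _ ≤ 2 ^ θ * (∑ k ∈ range N, (((k : ℝ) + 1) ^ θ)⁻¹) * C * Δ ^ θ +
          2 ^ θ * (((N : ℝ) + 1) ^ θ)⁻¹ * C * Δ ^ θ := by
          refine (norm_sub_le _ _).trans (add_le_add ?_ hremove)
          simpa only [hv0, hvN] using ih hv (by rwa [hv0]) (by rwa [hvN])
      _ = _ := by rw [sum_range_succ]; ring

theorem norm_sum_sub_le_youngConst (hA : DefectBound A C θ T) (hC : 0 ≤ C) (hθ : 1 < θ)
    {N : ℕ} {u : ℕ → ℝ} (hu : Monotone u) (hu0 : 0 ≤ u 0) (huT : u N ≤ T) :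
    ‖∑ i ∈ range N, A (u i) (u (i + 1)) - A (u 0) (u N)‖ ≤ youngConst θ * C * (u N - u 0) ^ θ := by
  rcases N with _ | N
  · simp [hA.apply_self_eq_zero (by linarith) hu0 huT, Real.zero_rpow (by linarith : θ ≠ 0)]
  · refine (hA.norm_sum_range_succ_sub_le hC (by linarith) N hu hu0 huT).trans ?_
    have hsum := (summable_inv_add_one_rpow hθ).sum_le_tsum (range N) fun k _ => by positivity
    have hΔ : 0 ≤ u (N + 1) - u 0 := sub_nonneg.2 (hu (Nat.zero_le _))
    unfold youngConst
    gcongr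

theorem gridSum_zero (hA : DefectBound A C θ T) (hθ : θ ≠ 0) (hT : 0 ≤ T) {h : ℝ} (hh : 0 ≤ h)
    (N : ℕ) : gridSum A h N 0 = 0 :=
  sum_eq_zero fun j _ => by
    rw [min_eq_right (by positivity), min_eq_right (by positivity),
      hA.apply_self_eq_zero hθ le_rfl hT]

theorem norm_add_sub_le (hA : DefectBound A C θ T) (hC : 0 ≤ C) (hθ : 1 ≤ θ) {a m b h : ℝ}
    (ha : 0 ≤ a) (ham : a ≤ m) (hmb : m ≤ b) (hbT : b ≤ T) (hbh : b - a ≤ h) :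
    ‖A a m + A m b - A a b‖ ≤ C * h ^ (θ - 1) * (b - a) := by
  rw [← norm_neg, show -(A a m + A m b - A a b) = A a b - A a m - A m b by abel]
  calc _ ≤ C * (b - a) ^ θ := hA a m b ha ham hmb hbT
    _ ≤ C * (h ^ (θ - 1) * (b - a)) := by
        gcongr; exact rpow_le_rpow_sub_one_mul (by linarith) hbh hθ
    _ = _ := by ring

theorem norm_gridSum_half_sub_le (hA : DefectBound A C θ T) (hC : 0 ≤ C) (hθ : 1 ≤ θ) {h : ℝ}
    (hh : 0 ≤ h) {N : ℕ} {t : ℝ} (ht0 : 0 ≤ t) (htN : t ≤ N * h) (htT : t ≤ T) :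
    ‖gridSum A (h / 2) (2 * N) t - gridSum A h N t‖ ≤ C * h ^ (θ - 1) * t := by
  have hcell : ∀ j : ℕ,
      ‖A (min ((2 * j : ℕ) * (h / 2)) t) (min (((2 * j : ℕ) + 1) * (h / 2)) t) +
          A (min ((2 * j + 1 : ℕ) * (h / 2)) t) (min (((2 * j + 1 : ℕ) + 1) * (h / 2)) t) -
          A (min (j * h) t) (min ((j + 1) * h) t)‖ ≤
        C * h ^ (θ - 1) * (min ((j + 1 : ℕ) * h) t - min (j * h) t) := by
    intro j
    have e1 : ((2 * j : ℕ) : ℝ) * (h / 2) = j * h := by push_cast; ring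
    have e2 : (((2 * j : ℕ) : ℝ) + 1) * (h / 2) = j * h + h / 2 := by push_cast; ring
    have e3 : ((2 * j + 1 : ℕ) : ℝ) * (h / 2) = j * h + h / 2 := by push_cast; ring
    have e4 : (((2 * j + 1 : ℕ) : ℝ) + 1) * (h / 2) = j * h + h := by push_cast; ring
    have e5 : ((j + 1 : ℕ) : ℝ) * h = j * h + h := by push_cast; ring
    have e6 : ((j : ℝ) + 1) * h = j * h + h := by ring
    rw [e1, e2, e3, e4, e5, e6]
    exact hA.norm_add_sub_le hC hθ (le_min (by positivity) ht0)
      (min_le_min_right _ (by linarith)) (min_le_min_right _ (by linarith))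
      ((min_le_right _ _).trans htT) (min_add_sub_min_le hh)
  calc _ = ‖∑ j ∈ range N,
        (A (min ((2 * j : ℕ) * (h / 2)) t) (min (((2 * j : ℕ) + 1) * (h / 2)) t) +
          A (min ((2 * j + 1 : ℕ) * (h / 2)) t) (min (((2 * j + 1 : ℕ) + 1) * (h / 2)) t) -
          A (min (j * h) t) (min ((j + 1) * h) t))‖ := by
        rw [gridSum, gridSum, sum_range_two_mul, ← sum_sub_distrib]
    _ ≤ ∑ j ∈ range N, C * h ^ (θ - 1) * (min ((j + 1 : ℕ) * h) t - min (j * h) t) :=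
        (norm_sum_le _ _).trans (sum_le_sum fun j _ => hcell j)
    _ = C * h ^ (θ - 1) * t := by
        rw [← mul_sum, sum_range_sub (fun j : ℕ => min (j * h) t)]
        simp [min_eq_right htN, min_eq_left ht0]

theorem norm_sub_sub_min_max_le (hA : DefectBound A C θ T) (hθ : θ ≠ 0) {a b s : ℝ}
    (ha : 0 ≤ a) (hab : a ≤ b) (hbT : b ≤ T) (hs : 0 ≤ s) (hsT : s ≤ T) :
    ‖A a b - A (min a s) (min b s) - A (max a s) (max b s)‖ ≤
      if a < s ∧ s < b then C * (b - a) ^ θ else 0 := by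
  split_ifs with h
  · rw [min_eq_left h.1.le, min_eq_right h.2.le, max_eq_right h.1.le, max_eq_left h.2.le]
    exact hA a s b ha h.1.le h.2.le hbT
  · rcases le_or_gt s a with hsa | has
    · simp [min_eq_right hsa, min_eq_right (hsa.trans hab), max_eq_left hsa,
        max_eq_left (hsa.trans hab), hA.apply_self_eq_zero hθ hs hsT]
    · have hbs : b ≤ s := not_lt.1 fun hsb => h ⟨has, hsb⟩
      simp [min_eq_left has.le, min_eq_left hbs, max_eq_right has.le, max_eq_right hbs,
        hA.apply_self_eq_zero hθ hs hsT]

theorem norm_gridSum_sub_sub_sum_le (hA : DefectBound A C θ T) (hC : 0 ≤ C) (hθ : 0 < θ)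
    {h : ℝ} (hh : 0 ≤ h) (N : ℕ) {s t : ℝ} (hs : 0 ≤ s) (hst : s ≤ t) (htT : t ≤ T) :
    ‖gridSum A h N t - gridSum A h N s -
        ∑ j ∈ range N, A (max (min (j * h) t) s) (max (min ((j + 1) * h) t) s)‖ ≤ C * h ^ θ := by
  set a : ℕ → ℝ := fun j => min (j * h) t
  have ha : Monotone a := fun i j hij => min_le_min_right _ (by gcongr)
  have hsucc : ∀ j : ℕ, a (j + 1) = min ((j + 1) * h) t := fun j => by simp [a]
  -- only the cell that straddles `s` contributes
  have hstraddle : #{j ∈ range N | a j < s ∧ s < a (j + 1)} ≤ 1 := by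
    refine card_le_one.2 fun i hi j hj => ?_
    simp only [mem_filter] at hi hj
    by_contra hij
    rcases Nat.lt_or_gt_of_ne hij with hlt | hlt
    · exact (hi.2.2.trans_le (ha hlt)).not_gt hj.2.1
    · exact (hj.2.2.trans_le (ha hlt)).not_gt hi.2.1
  calc _ = ‖∑ j ∈ range N, (A (a j) (a (j + 1)) - A (min (a j) s) (min (a (j + 1)) s) -
        A (max (a j) s) (max (a (j + 1)) s))‖ := by
        simp only [gridSum, ← sum_sub_distrib, hsucc, a, min_assoc, min_eq_right hst]
    _ ≤ ∑ j ∈ range N, if a j < s ∧ s < a (j + 1) then C * (a (j + 1) - a j) ^ θ else 0 :=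
        (norm_sum_le _ _).trans <| sum_le_sum fun j _ =>
          hA.norm_sub_sub_min_max_le hθ.ne' (le_min (by positivity) (hs.trans hst))
            (ha (Nat.le_succ j)) ((min_le_right _ _).trans htT) hs (hst.trans htT)
    _ = ∑ j ∈ range N with a j < s ∧ s < a (j + 1), C * (a (j + 1) - a j) ^ θ :=
        (sum_filter _ _).symm
    _ ≤ #{j ∈ range N | a j < s ∧ s < a (j + 1)} • (C * h ^ θ) := by
        refine sum_le_card_nsmul _ _ _ fun j _ => ?_
        gcongr
        · exact sub_nonneg.2 (ha (Nat.le_succ j))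
        · rw [hsucc, add_one_mul]; exact min_add_sub_min_le hh
    _ ≤ C * h ^ θ := by
        rw [nsmul_eq_mul]
        exact mul_le_of_le_one_left (by positivity) (by exact_mod_cast hstraddle)

theorem norm_gridSum_sub_sub_le (hA : DefectBound A C θ T) (hC : 0 ≤ C) (hθ : 1 < θ) {h : ℝ}
    (hh : 0 ≤ h) {N : ℕ} (hNh : N * h = T) {s t : ℝ} (hs : 0 ≤ s) (hst : s ≤ t) (htT : t ≤ T) :
    ‖gridSum A h N t - gridSum A h N s - A s t‖ ≤ youngConst θ * C * (t - s) ^ θ + C * h ^ θ := by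
  set w : ℕ → ℝ := fun j => max (min (j * h) t) s
  have hw : Monotone w := fun i j hij => max_le_max_right _ (min_le_min_right _ (by gcongr))
  have hw0 : w 0 = s := by simp [w, min_eq_left (hs.trans hst), hs]
  have hwN : w N = t := by simp [w, hNh, min_eq_right htT, hst]
  have hyoung := hA.norm_sum_sub_le_youngConst hC hθ hw (by rw [hw0]; exact hs)
    (by rw [hwN]; exact htT)
  rw [hw0, hwN] at hyoung
  have hsucc : ∀ j : ℕ, w (j + 1) = max (min ((j + 1) * h) t) s := fun j => by simp [w]
  simp only [hsucc] at hyoung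
  calc _ = ‖(gridSum A h N t - gridSum A h N s -
        ∑ j ∈ range N, A (max (min (j * h) t) s) (max (min ((j + 1) * h) t) s)) +
        (∑ j ∈ range N, A (w j) (max (min ((j + 1) * h) t) s) - A s t)‖ := by
        congr 1; abel
    _ ≤ C * h ^ θ + youngConst θ * C * (t - s) ^ θ :=
        (norm_add_le _ _).trans (add_le_add
          (hA.norm_gridSum_sub_sub_sum_le hC (by linarith) hh N hs hst htT) hyoung)
    _ = _ := add_comm _ _

theorem exists_sewing [CompleteSpace E] (hA : DefectBound A C θ T) (hC : 0 ≤ C) (hθ : 1 < θ)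
    (hT : 0 ≤ T) :
    ∃ L : ℝ → E, L 0 = 0 ∧ ∀ s t, 0 ≤ s → s ≤ t → t ≤ T →
      ‖L t - L s - A s t‖ ≤ youngConst θ * C * (t - s) ^ θ := by
  set G : ℕ → ℝ → E := fun k => gridSum A (T / 2 ^ k) (2 ^ k)
  have hmesh : ∀ k : ℕ, ((2 ^ k : ℕ) : ℝ) * (T / 2 ^ k) = T := fun k => by
    push_cast; field_simp
  have hcauchy : ∀ t, 0 ≤ t → t ≤ T → CauchySeq fun k => G k t := by
    intro t ht0 htT
    refine cauchySeq_of_summable_dist <|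
      ((summable_div_two_pow_rpow hT (by linarith : 0 < θ - 1)).mul_left (C * t)).of_nonneg_of_le
        (fun _ => dist_nonneg) fun k => ?_
    have hk : G (k + 1) t = gridSum A (T / 2 ^ k / 2) (2 * 2 ^ k) t := by
      simp only [G, pow_succ, div_div, mul_comm 2]
    rw [dist_comm, dist_eq_norm, hk, mul_right_comm]
    exact hA.norm_gridSum_half_sub_le hC hθ.le (by positivity) ht0 (by rw [hmesh]; exact htT) htT
  refine ⟨fun t => limUnder atTop fun k => G k t, ?_, fun s t hs hst htT => ?_⟩
  · simp only [G, hA.gridSum_zero (by linarith) hT (by positivity : (0 : ℝ) ≤ T / 2 ^ _)]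
    exact tendsto_const_nhds.limUnder_eq
  · have hlim := (((hcauchy t (hs.trans hst) htT).tendsto_limUnder.sub
      (hcauchy s hs (hst.trans htT)).tendsto_limUnder).sub_const (A s t)).norm
    have hbound := tendsto_const_nhds (x := youngConst θ * C * (t - s) ^ θ) |>.add
      (((summable_div_two_pow_rpow hT (by linarith : 0 < θ)).tendsto_atTop_zero).const_mul C)
    rw [mul_zero, add_zero] at hbound
    exact le_of_tendsto_of_tendsto' hlim hbound fun k =>
      hA.norm_gridSum_sub_sub_le hC hθ (by positivity) (hmesh k) hs hst htT

end DefectBound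

theorem norm_sub_sub_riemannSum_le {L : ℝ → E} {K δ : ℝ}
    (hL : ∀ s t, 0 ≤ s → s ≤ t → t ≤ T → ‖L t - L s - A s t‖ ≤ K * (t - s) ^ θ) (hK : 0 ≤ K)
    (hθ : 1 ≤ θ) {N : ℕ} {u : ℕ → ℝ} (hu0 : u 0 = 0) (huN : u N = T)
    (hu : ∀ i < N, u i ≤ u (i + 1)) (hmesh : ∀ i < N, u (i + 1) - u i ≤ δ) {t : ℝ} (ht0 : 0 ≤ t)
    (htT : t ≤ T) :
    ‖L t - L 0 - ∑ i ∈ range N, (if u i ≤ t then A (u i) (min (u (i + 1)) t) else 0)‖ ≤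
      K * δ ^ (θ - 1) * T := by
  have htel : L t - L 0 =
      ∑ i ∈ range N, (if u i ≤ t then L (min (u (i + 1)) t) - L (u i) else 0) := by
    calc L t - L 0 = L (min (u N) t) - L (min (u 0) t) := by
          rw [huN, hu0, min_eq_right htT, min_eq_left ht0]
      _ = ∑ i ∈ range N, (L (min (u (i + 1)) t) - L (min (u i) t)) :=
          (sum_range_sub (fun i => L (min (u i) t)) N).symm
      _ = _ := sum_congr rfl fun i hi => by
          split_ifs with h
          · rw [min_eq_left h]
          · have hti : t ≤ u i := (not_le.1 h).le
            rw [min_eq_right hti, min_eq_right (hti.trans (hu i (Finset.mem_range.1 hi))),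
              sub_self]
  rw [htel, ← sum_sub_distrib]
  calc _ ≤ ∑ i ∈ range N, K * δ ^ (θ - 1) * (u (i + 1) - u i) :=
        (norm_sum_le _ _).trans (sum_le_sum fun i hi => ?_)
    _ = K * δ ^ (θ - 1) * T := by rw [← mul_sum, sum_range_sub, huN, hu0, sub_zero]
  rw [Finset.mem_range] at hi
  have hstep : 0 ≤ u (i + 1) - u i := sub_nonneg.2 (hu i hi)
  have hδ : 0 ≤ δ := hstep.trans (hmesh i hi)
  split_ifs with h
  · have hb : min (u (i + 1)) t - u i ≤ u (i + 1) - u i := by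
      linarith [min_le_left (u (i + 1)) t]
    have hb0 : 0 ≤ min (u (i + 1)) t - u i := sub_nonneg.2 (le_min (hu i hi) h)
    calc _ ≤ K * (min (u (i + 1)) t - u i) ^ θ :=
          hL _ _ (hu0 ▸ apply_zero_le_of_forall_le_succ hu hi.le) (le_min (hu i hi) h)
            ((min_le_right _ _).trans htT)
      _ ≤ K * (δ ^ (θ - 1) * (min (u (i + 1)) t - u i)) := by
          gcongr
          exact rpow_le_rpow_sub_one_mul hb0 (hb.trans (hmesh i hi)) hθ
      _ ≤ K * δ ^ (θ - 1) * (u (i + 1) - u i) := by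
          rw [← mul_assoc]; gcongr
  · rw [sub_zero, norm_zero]; positivity

end Sewing

section LpGerm

variable {Ω E F : Type*} {m0 : MeasurableSpace Ω} {μ : Measure Ω} {p : ENNReal}
  [NormedAddCommGroup E] [NormedSpace ℝ E] [NormedAddCommGroup F] [NormedSpace ℝ F]
  {Z : ℝ → Ω → (E →L[ℝ] F)} {X : ℝ → E}

open Classical in
noncomputable def lpGerm (Z : ℝ → Ω → (E →L[ℝ] F)) (X : ℝ → E) (p : ENNReal) (μ : Measure Ω)
    (s t : ℝ) : Lp F p μ :=
  if h : MemLp (fun ω => Z s ω (X t - X s)) p μ then h.toLp _ else 0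

theorem lpGerm_ae_eq {s : ℝ} (hZ : MemLp (Z s) p μ) (t : ℝ) :
    ⇑(lpGerm Z X p μ s t) =ᵐ[μ] fun ω => Z s ω (X t - X s) := by
  have h : MemLp (fun ω => Z s ω (X t - X s)) p μ :=
    (ContinuousLinearMap.apply ℝ F (X t - X s)).comp_memLp' hZ
  rw [lpGerm, dif_pos h]
  exact h.coeFn_toLp

theorem aestronglyMeasurable_lpGerm {m : MeasurableSpace Ω} {s : ℝ}
    (hZm : StronglyMeasurable[m] (Z s)) (hZ : MemLp (Z s) p μ) (t : ℝ) :
    AEStronglyMeasurable[m] (lpGerm Z X p μ s t) μ :=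
  ⟨_, (ContinuousLinearMap.apply ℝ F (X t - X s)).continuous.comp_stronglyMeasurable hZm,
    lpGerm_ae_eq hZ t⟩

theorem defectBound_lpGerm [Fact (1 ≤ p)] {T α β CX CZ : ℝ} (hα : 0 ≤ α) (hβ : 0 ≤ β)
    (hCX : 0 ≤ CX) (hCZ : 0 ≤ CZ) (hZ : ∀ t, 0 ≤ t → t ≤ T → MemLp (Z t) p μ)
    (hX : ∀ s t, 0 ≤ s → s ≤ t → t ≤ T → ‖X t - X s‖ ≤ CX * (t - s) ^ α)
    (hZβ : ∀ s t, 0 ≤ s → s ≤ t → t ≤ T →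
      eLpNorm (fun ω => Z t ω - Z s ω) p μ ≤ ENNReal.ofReal (CZ * (t - s) ^ β)) :
    DefectBound (lpGerm Z X p μ) (CX * CZ) (α + β) T := by
  intro s u t hs hsu hut htT
  have hu : 0 ≤ u := hs.trans hsu
  have hae : ⇑(lpGerm Z X p μ s t - lpGerm Z X p μ s u - lpGerm Z X p μ u t) =ᵐ[μ]
      fun ω => (Z s ω - Z u ω) (X t - X u) := by
    filter_upwards [Lp.coeFn_sub (lpGerm Z X p μ s t - lpGerm Z X p μ s u) (lpGerm Z X p μ u t),
      Lp.coeFn_sub (lpGerm Z X p μ s t) (lpGerm Z X p μ s u),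
      lpGerm_ae_eq (X := X) (hZ s hs (hsu.trans (hut.trans htT))) t,
      lpGerm_ae_eq (X := X) (hZ s hs (hsu.trans (hut.trans htT))) u,
      lpGerm_ae_eq (X := X) (hZ u hu (hut.trans htT)) t] with ω h1 h2 h3 h4 h5
    rw [h1, Pi.sub_apply, h2, Pi.sub_apply, h3, h4, h5, sub_apply, ← map_sub,
      sub_sub_sub_cancel_right]
  have hts : 0 ≤ t - s := by linarith
  have hXb : ‖X t - X u‖ ≤ CX * (t - s) ^ α := (hX u t hu hut htT).trans (by gcongr)
  have hZb : eLpNorm (fun ω => Z u ω - Z s ω) p μ ≤ ENNReal.ofReal (CZ * (t - s) ^ β) :=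
    (hZβ s u hs hsu (hut.trans htT)).trans (ENNReal.ofReal_le_ofReal (by gcongr))
  rw [Lp.norm_def, eLpNorm_congr_ae hae]
  refine ENNReal.toReal_le_of_le_ofReal (by positivity) ?_
  calc _ ≤ ENNReal.ofReal ‖X t - X u‖ * eLpNorm (fun ω => Z u ω - Z s ω) p μ :=
        eLpNorm_le_mul_eLpNorm_of_ae_le_mul (Eventually.of_forall fun ω => by
          rw [norm_sub_rev (Z u ω), mul_comm]; exact ContinuousLinearMap.le_opNorm _ _) p
    _ ≤ ENNReal.ofReal (CX * (t - s) ^ α) * ENNReal.ofReal (CZ * (t - s) ^ β) := by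
        gcongr
    _ = ENNReal.ofReal (CX * CZ * (t - s) ^ (α + β)) := by
        rw [← ENNReal.ofReal_mul (by positivity), Real.rpow_add_of_nonneg hts hα hβ]
        ring_nf

theorem eLpNorm_increment_sub_lpGerm {I : ℝ → Ω → F} {L : ℝ → Lp F p μ} {s t : ℝ}
    (hZ : MemLp (Z s) p μ) (hIt : I t =ᵐ[μ] L t) (hIs : I s =ᵐ[μ] L s) :
    eLpNorm (fun ω => I t ω - I s ω - Z s ω (X t - X s)) p μ =
      ‖L t - L s - lpGerm Z X p μ s t‖ₑ := by
  rw [Lp.enorm_def]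
  refine eLpNorm_congr_ae ?_
  filter_upwards [Lp.coeFn_sub (L t - L s) (lpGerm Z X p μ s t), Lp.coeFn_sub (L t) (L s),
    hIt, hIs, lpGerm_ae_eq (X := X) hZ t] with ω h1 h2 h3 h4 h5
  rw [h1, Pi.sub_apply, h2, Pi.sub_apply, h3, h4, h5]

theorem eLpNorm_sub_riemannSum {T : ℝ} (hZ : ∀ t, 0 ≤ t → t ≤ T → MemLp (Z t) p μ)
    {I : ℝ → Ω → F} {L : ℝ → Lp F p μ} {N : ℕ} {u : ℕ → ℝ} (hu0 : u 0 = 0)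
    (hu : ∀ i < N, u i ≤ u (i + 1)) {t : ℝ} (htT : t ≤ T) (hIt : I t =ᵐ[μ] L t) :
    eLpNorm (fun ω => I t ω - ∑ i ∈ range N,
        if u i ≤ t then Z (u i) ω (X (min (u (i + 1)) t) - X (u i)) else 0) p μ =
      ‖L t - ∑ i ∈ range N,
        if u i ≤ t then lpGerm Z X p μ (u i) (min (u (i + 1)) t) else 0‖ₑ := by
  have hterm : ∀ i ∈ range N,
      ⇑(if u i ≤ t then lpGerm Z X p μ (u i) (min (u (i + 1)) t) else 0) =ᵐ[μ]
        fun ω => if u i ≤ t then Z (u i) ω (X (min (u (i + 1)) t) - X (u i)) else 0 := by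
    intro i hi
    split_ifs with h
    · exact lpGerm_ae_eq (hZ _ (hu0 ▸ apply_zero_le_of_forall_le_succ hu
        (Finset.mem_range.1 hi).le) (h.trans htT)) _
    · exact Lp.coeFn_zero _ _ _
  rw [Lp.enorm_def]
  refine eLpNorm_congr_ae ?_
  filter_upwards [Lp.coeFn_sub (L t) _, hIt, Lp.coeFn_fun_finsetSum (range N)
      fun i => if u i ≤ t then lpGerm Z X p μ (u i) (min (u (i + 1)) t) else 0,
    (eventually_all_finset _).2 hterm] with ω h1 h2 h3 h4
  rw [h1, Pi.sub_apply, h2, h3, sum_congr rfl h4]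

end LpGerm

section Adapted

variable {Ω F : Type*} {m0 : MeasurableSpace Ω} {μ : Measure Ω} {p : ENNReal}
  [NormedAddCommGroup F] {𝒢 : Filtration ℝ m0}

theorem aestronglyMeasurable_of_norm_sub_sub_le [Fact (1 ≤ p)] [CompleteSpace F]
    {A : ℝ → ℝ → Lp F p μ} {L : ℝ → Lp F p μ} {K θ T : ℝ} (hL0 : L 0 = 0)
    (hL : ∀ s t, 0 ≤ s → s ≤ t → t ≤ T → ‖L t - L s - A s t‖ ≤ K * (t - s) ^ θ) (hK : 0 ≤ K)
    (hθ : 1 < θ) (hA : ∀ s t, 0 ≤ s → s ≤ T → AEStronglyMeasurable[𝒢 s] (A s t) μ) {t : ℝ}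
    (ht0 : 0 ≤ t) (htT : t ≤ T) :
    AEStronglyMeasurable[𝒢 t] (L t) μ := by
  have hT : 0 ≤ T := ht0.trans htT
  set u : ℕ → ℕ → ℝ := fun N i => i * (T / (N + 1))
  set R : ℕ → Lp F p μ := fun N =>
    ∑ i ∈ range (N + 1), if u N i ≤ t then A (u N i) (min (u N (i + 1)) t) else 0
  have hR : ∀ N, R N ∈ lpMeasSubgroup F (𝒢 t) p μ := fun N =>
    AddSubgroup.sum_mem _ fun i _ => by
      split_ifs with h
      · exact mem_lpMeasSubgroup_iff_aestronglyMeasurable.2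
          ((hA _ _ (by positivity) (h.trans htT)).mono (𝒢.mono h))
      · exact zero_mem _
  have hRL : Tendsto R atTop (𝓝 (L t)) := by
    rw [tendsto_iff_norm_sub_tendsto_zero]
    have hmesh : Tendsto (fun N : ℕ => T / ((N : ℝ) + 1)) atTop (𝓝 0) := by
      simpa [Function.comp_def] using
        (tendsto_const_div_atTop_nhds_zero_nat T).comp (tendsto_add_atTop_nat 1)
    refine squeeze_zero (fun _ => norm_nonneg _) (fun N => ?_)
      ((tendsto_mul_rpow_nhds_zero (K * T) (by linarith : 0 < θ - 1)).comp hmesh)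
    have hstep : ∀ i, u N (i + 1) - u N i = T / (N + 1) := fun i => by
      simp only [u]; push_cast; ring
    have := norm_sub_sub_riemannSum_le hL hK hθ.le (N := N + 1) (u := u N) (by simp [u])
      (by simp only [u]; push_cast; field_simp)
      (fun i _ => by linarith [hstep i, show 0 ≤ T / (N + 1) by positivity])
      (fun i _ => (hstep i).le) ht0 htT
    rw [hL0, sub_zero, ← norm_neg, neg_sub] at this
    exact this.trans_eq (by simp only [Function.comp]; ring)
  exact (isClosed_aestronglyMeasurable (𝒢.le t)).mem_of_tendsto hRL (Eventually.of_forall hR)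

theorem exists_adapted_version {L : ℝ → Lp F p μ} {T : ℝ} (hL0 : L 0 = 0)
    (hL : ∀ t, 0 ≤ t → t ≤ T → AEStronglyMeasurable[𝒢 t] (L t) μ) :
    ∃ I : ℝ → Ω → F, I 0 = 0 ∧
      ∀ t, 0 ≤ t → t ≤ T → StronglyMeasurable[𝒢 t] (I t) ∧ I t =ᵐ[μ] L t := by
  classical
  refine ⟨fun t => if h : t ≠ 0 ∧ 0 ≤ t ∧ t ≤ T then (hL t h.2.1 h.2.2).mk _ else 0, by simp,
    fun t ht0 htT => ?_⟩
  by_cases ht : t = 0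
  · subst ht
    simp only [ne_eq, not_true_eq_false, false_and, dite_false, hL0]
    exact ⟨stronglyMeasurable_const, (Lp.coeFn_zero _ _ _).symm⟩
  · simp only [ne_eq, ht, not_false_eq_true, ht0, htT, and_self, dite_true]
    exact ⟨(hL t ht0 htT).stronglyMeasurable_mk, (hL t ht0 htT).ae_eq_mk.symm⟩

end Adapted

theorem stochastic_young_integral_general (α β : ℝ) (hα0 : 0 < α)
    (hβ0 : 0 < β) (hαβ : 1 < α + β) :
    ∃ K : ℝ, 0 < K ∧
      ∀ (Ω : Type) [m0 : MeasurableSpace Ω] (ℙ : Measure Ω) [IsProbabilityMeasure ℙ]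
        (𝒢 : Filtration ℝ m0)
        (d n : ℕ) (T : ℝ), 0 < T →
      ∀ (m : ℝ), 1 ≤ m →
      ∀ (X : ℝ → (Fin d → ℝ))
        (Z : ℝ → Ω → ((Fin d → ℝ) →L[ℝ] (Fin n → ℝ)))
        (CX CZ : ℝ), 0 ≤ CX → 0 ≤ CZ →
      -- `X` is `α`-Hölder continuous with seminorm at most `CX`
      (∀ s t : ℝ, 0 ≤ s → s ≤ t → t ≤ T → ‖X t - X s‖ ≤ CX * (t - s) ^ α) →
      -- `Z` is adapted and `L^m`-integrable
      (∀ t : ℝ, 0 ≤ t → t ≤ T →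
          StronglyMeasurable[𝒢 t] (Z t) ∧ MemLp (Z t) (ENNReal.ofReal m) ℙ) →
      -- `‖Z‖_{β;m} ≤ CZ`
      (∀ s t : ℝ, 0 ≤ s → s ≤ t → t ≤ T →
          eLpNorm (fun ω => Z t ω - Z s ω) (ENNReal.ofReal m) ℙ
            ≤ ENNReal.ofReal (CZ * (t - s) ^ β)) →
      ∃ I : ℝ → Ω → (Fin n → ℝ),
        I 0 = 0 ∧
        (∀ t : ℝ, 0 ≤ t → t ≤ T →
            StronglyMeasurable[𝒢 t] (I t) ∧ MemLp (I t) (ENNReal.ofReal m) ℙ) ∧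
        -- the local estimate
        (∀ s t : ℝ, 0 ≤ s → s ≤ t → t ≤ T →
            eLpNorm (fun ω => I t ω - I s ω - Z s ω (X t - X s)) (ENNReal.ofReal m) ℙ
              ≤ ENNReal.ofReal (K * CX * CZ * (t - s) ^ (α + β))) ∧
        -- convergence of left-point Riemann sums along partitions of vanishing mesh
        (∀ ε : ℝ, 0 < ε → ∃ δ : ℝ, 0 < δ ∧
            ∀ (N : ℕ) (u : ℕ → ℝ), u 0 = 0 → u N = T →
              (∀ i < N, u i < u (i + 1)) →
              (∀ i < N, u (i + 1) - u i ≤ δ) →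
              ∀ t : ℝ, 0 ≤ t → t ≤ T →
                eLpNorm (fun ω => I t ω -
                    ∑ i ∈ Finset.range N,
                      (if u i ≤ t then Z (u i) ω (X (min (u (i + 1)) t) - X (u i)) else 0))
                  (ENNReal.ofReal m) ℙ ≤ ENNReal.ofReal ε) := by
  refine ⟨youngConst (α + β), youngConst_pos hαβ, ?_⟩
  intro Ω m0 ℙ _ 𝒢 d n T hT m hm X Z CX CZ hCX hCZ hX hZ hZβ
  have : Fact (1 ≤ ENNReal.ofReal m) := ⟨ENNReal.one_le_ofReal.2 hm⟩
  have hZp : ∀ t, 0 ≤ t → t ≤ T → MemLp (Z t) (ENNReal.ofReal m) ℙ :=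
    fun t ht0 htT => (hZ t ht0 htT).2
  have hK : 0 ≤ youngConst (α + β) * (CX * CZ) :=
    mul_nonneg (youngConst_pos hαβ).le (mul_nonneg hCX hCZ)
  obtain ⟨L, hL0, hL⟩ := (defectBound_lpGerm hα0.le hβ0.le hCX hCZ hZp hX hZβ).exists_sewing
    (mul_nonneg hCX hCZ) hαβ hT.le
  obtain ⟨I, hI0, hI⟩ := exists_adapted_version hL0 fun t ht0 htT =>
    aestronglyMeasurable_of_norm_sub_sub_le hL0 hL hK hαβ
      (fun s t hs hsT => aestronglyMeasurable_lpGerm (hZ s hs hsT).1 (hZ s hs hsT).2 t) ht0 htT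
  refine ⟨I, hI0, fun t ht0 htT => ⟨(hI t ht0 htT).1, (Lp.memLp _).ae_eq (hI t ht0 htT).2.symm⟩,
    fun s t hs hst htT => ?_, fun ε hε => ?_⟩
  · rw [eLpNorm_increment_sub_lpGerm (hZp s hs (hst.trans htT)) (hI t (hs.trans hst) htT).2
      (hI s hs (hst.trans htT)).2, ← ofReal_norm]
    exact ENNReal.ofReal_le_ofReal ((hL s t hs hst htT).trans_eq (by ring))
  · obtain ⟨δ, hδ, hδε⟩ := exists_pos_mul_rpow_le (youngConst (α + β) * (CX * CZ) * T)
      (by linarith : 0 < α + β - 1) hε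
    refine ⟨δ, hδ, fun N u hu0 huN hu hmesh t ht0 htT => ?_⟩
    have hriemann := norm_sub_sub_riemannSum_le hL hK hαβ.le hu0 huN (fun i hi => (hu i hi).le)
      hmesh ht0 htT
    rw [hL0, sub_zero] at hriemann
    rw [eLpNorm_sub_riemannSum hZp hu0 (fun i hi => (hu i hi).le) htT (hI t ht0 htT).2,
      ← ofReal_norm]
    exact ENNReal.ofReal_le_ofReal (hriemann.trans (by linarith))

/-- Construction of the stochastic Young integral `∫ Z dX` of an adapted
`L^m`-integrable, `β`-Hölder (in `L^m`) process `Z` against a deterministic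
`α`-Hölder path `X`, when `α + β > 1`: there is an adapted `L^m` process `I`
with `I_0 = 0` satisfying the local estimate
`‖I_t - I_s - Z_s (X_t - X_s)‖_m ≤ K ‖X‖_α ‖Z‖_{β;m} (t-s)^(α+β)` (with `K`
depending only on `α, β`), and `I` is the limit in `L^m`, uniformly in `t`, of
left-point Riemann sums along partitions of vanishing mesh. -/
theorem stochastic_young_integral (α β : ℝ) (hα0 : 0 < α) (hα1 : α < 1)
    (hβ0 : 0 < β) (hβ1 : β ≤ 1) (hαβ : 1 < α + β) :
    ∃ K : ℝ, 0 < K ∧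
      ∀ (Ω : Type) [m0 : MeasurableSpace Ω] (ℙ : Measure Ω) [IsProbabilityMeasure ℙ]
        (𝒢 : Filtration ℝ m0)
        (d n : ℕ) (T : ℝ), 0 < T →
      ∀ (m : ℝ), 1 ≤ m →
      ∀ (X : ℝ → (Fin d → ℝ))
        (Z : ℝ → Ω → ((Fin d → ℝ) →L[ℝ] (Fin n → ℝ)))
        (CX CZ : ℝ), 0 ≤ CX → 0 ≤ CZ →
      -- `X` is `α`-Hölder continuous with seminorm at most `CX`
      (∀ s t : ℝ, 0 ≤ s → s ≤ t → t ≤ T → ‖X t - X s‖ ≤ CX * (t - s) ^ α) →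
      -- `Z` is adapted and `L^m`-integrable
      (∀ t : ℝ, 0 ≤ t → t ≤ T →
          StronglyMeasurable[𝒢 t] (Z t) ∧ MemLp (Z t) (ENNReal.ofReal m) ℙ) →
      -- `‖Z‖_{β;m} ≤ CZ`
      (∀ s t : ℝ, 0 ≤ s → s ≤ t → t ≤ T →
          eLpNorm (fun ω => Z t ω - Z s ω) (ENNReal.ofReal m) ℙ
            ≤ ENNReal.ofReal (CZ * (t - s) ^ β)) →
      ∃ I : ℝ → Ω → (Fin n → ℝ),
        I 0 = 0 ∧
        (∀ t : ℝ, 0 ≤ t → t ≤ T →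
            StronglyMeasurable[𝒢 t] (I t) ∧ MemLp (I t) (ENNReal.ofReal m) ℙ) ∧
        -- the local estimate
        (∀ s t : ℝ, 0 ≤ s → s ≤ t → t ≤ T →
            eLpNorm (fun ω => I t ω - I s ω - Z s ω (X t - X s)) (ENNReal.ofReal m) ℙ
              ≤ ENNReal.ofReal (K * CX * CZ * (t - s) ^ (α + β))) ∧
        -- convergence of left-point Riemann sums along partitions of vanishing mesh
        (∀ ε : ℝ, 0 < ε → ∃ δ : ℝ, 0 < δ ∧
            ∀ (N : ℕ) (u : ℕ → ℝ), u 0 = 0 → u N = T →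
              (∀ i < N, u i < u (i + 1)) →
              (∀ i < N, u (i + 1) - u i ≤ δ) →
              ∀ t : ℝ, 0 ≤ t → t ≤ T →
                eLpNorm (fun ω => I t ω -
                    ∑ i ∈ Finset.range N,
                      (if u i ≤ t then Z (u i) ω (X (min (u (i + 1)) t) - X (u i)) else 0))
                  (ENNReal.ofReal m) ℙ ≤ ENNReal.ofReal ε) :=
  stochastic_young_integral_general α β hα0 hβ0 hαβ
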